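/- arXiv:2007.00331 — 2 statements merged into one kernel-verified Lean document; each statement's English description precedes it below -/
import Mathlib

section
/- Let Ω ⊆ ℝ³ be open and R : Ω → SO(3) a C² matrix field with curl R = α for a constant matrix α ∈ ℝ³ˣ³ (curl taken rowwise). Then for each i ∈ {1,2,3}, div Rᵢ = εᵢⱼₖ αⱼ · Rₖ on Ω, where Rᵢ, αᵢ denote rows. -/
open Matrix

/-- Partial derivative in the `i`-th coordinate direction. -/
noncomputable def pd {n : ℕ} (i : Fin n) (f : (Fin n → ℝ) → ℝ) (x : Fin n → ℝ) : ℝ :=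
  fderiv ℝ f x (Pi.single i 1)

/-- The Levi-Civita symbol in dimension 3. -/
def eps (i j k : Fin 3) : ℝ :=
  if (i, j, k) = (0, 1, 2) ∨ (i, j, k) = (1, 2, 0) ∨ (i, j, k) = (2, 0, 1) then 1
  else if (i, j, k) = (2, 1, 0) ∨ (i, j, k) = (0, 2, 1) ∨ (i, j, k) = (1, 0, 2) then -1
  else 0

/-!
For a rotation, `det R = 1` makes each row the cross product of the next two
(`R = cof R`), so `div Rᵢ = div (Rᵢ₊₁ × Rᵢ₊₂) = Rᵢ₊₂ · curl Rᵢ₊₁ - Rᵢ₊₁ · curl Rᵢ₊₂`,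
and `curl Rⱼ = αⱼ`.
-/

noncomputable def divergence {n : ℕ} (F : (Fin n → ℝ) → Fin n → ℝ) (x : Fin n → ℝ) : ℝ :=
  ∑ j, pd j (fun y => F y j) x

noncomputable def curl (F : (Fin 3 → ℝ) → Fin 3 → ℝ) (x : Fin 3 → ℝ) : Fin 3 → ℝ :=
  fun l => ∑ j, ∑ k, eps l j k * pd j (fun y => F y k) x

theorem sum_eps_smul {M : Type*} [AddCommGroup M] [Module ℝ M] (i : Fin 3) (f : Fin 3 → Fin 3 → M) :
    ∑ j, ∑ k, eps i j k • f j k = f (i + 1) (i + 2) - f (i + 2) (i + 1) := by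
  fin_cases i <;> simp [Fin.sum_univ_three, eps, sub_eq_add_neg, add_comm]

theorem curl_apply (F : (Fin 3 → ℝ) → Fin 3 → ℝ) (x : Fin 3 → ℝ) (l : Fin 3) :
    curl F x l = pd (l + 1) (fun y => F y (l + 2)) x - pd (l + 2) (fun y => F y (l + 1)) x := by
  simp only [curl, ← smul_eq_mul, sum_eps_smul]

theorem Matrix.cross_rows_eq_row {α : Type*} [CommRing α] {A : Matrix (Fin 3) (Fin 3) α}
    (hA : Aᵀ * A = 1) (hdet : A.det = 1) (i : Fin 3) : A (i + 1) ⨯₃ A (i + 2) = A i := by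
  -- The columns of the adjugate of a 3 × 3 matrix are cross products of its rows.
  have hadj : adjugate A = Aᵀ := by
    calc adjugate A = adjugate A * (A * Aᵀ) := by rw [mul_eq_one_comm.mp hA, mul_one]
      _ = Aᵀ := by rw [← Matrix.mul_assoc, adjugate_mul, hdet, one_smul, Matrix.one_mul]
  ext k
  have h := congrFun (congrFun hadj k) i
  fin_cases i <;> fin_cases k <;> simp [adjugate_fin_three, cross_apply] at h ⊢ <;> linear_combination h

section PartialDerivatives

variable {n : ℕ} {i : Fin n} {f g : (Fin n → ℝ) → ℝ} {x : Fin n → ℝ}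

theorem pd_mul (hf : DifferentiableAt ℝ f x) (hg : DifferentiableAt ℝ g x) :
    pd i (fun y => f y * g y) x = f x * pd i g x + g x * pd i f x := by
  simp [pd, fderiv_fun_mul hf hg]

theorem pd_sub (hf : DifferentiableAt ℝ f x) (hg : DifferentiableAt ℝ g x) :
    pd i (fun y => f y - g y) x = pd i f x - pd i g x := by
  simp [pd, fderiv_fun_sub hf hg]

theorem Filter.EventuallyEq.pd_eq (h : f =ᶠ[nhds x] g) : pd i f x = pd i g x := by
  rw [pd, pd, h.fderiv_eq]

end PartialDerivatives

theorem Filter.EventuallyEq.divergence_eq {n : ℕ} {F G : (Fin n → ℝ) → Fin n → ℝ} {x : Fin n → ℝ}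
    (h : F =ᶠ[nhds x] G) : divergence F x = divergence G x :=
  Finset.sum_congr rfl fun j _ => (h.fun_comp (· j)).pd_eq

theorem divergence_cross {a b : (Fin 3 → ℝ) → Fin 3 → ℝ} {x : Fin 3 → ℝ}
    (ha : ∀ k, DifferentiableAt ℝ (fun y => a y k) x)
    (hb : ∀ k, DifferentiableAt ℝ (fun y => b y k) x) :
    divergence (fun y => a y ⨯₃ b y) x = b x ⬝ᵥ curl a x - a x ⬝ᵥ curl b x := by
  have hab : ∀ k l, DifferentiableAt ℝ (fun y => a y k * b y l) x := fun k l => (ha k).mul (hb l)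
  simp only [divergence, dotProduct, Fin.sum_univ_three, curl_apply, cross_apply]
  simp only [Fin.isValue, Matrix.cons_val_zero, Matrix.cons_val_one, Matrix.cons_val_two, Matrix.head_cons,
    Matrix.tail_cons, Fin.reduceAdd]
  rw [pd_sub (hab 1 2) (hab 2 1), pd_sub (hab 2 0) (hab 0 2), pd_sub (hab 0 1) (hab 1 0)]
  simp only [pd_mul (ha _) (hb _)]
  ring

theorem div_of_rotation_field_with_constant_curl
    (Ω : Set (Fin 3 → ℝ)) (hΩ : IsOpen Ω)
    (R : (Fin 3 → ℝ) → Fin 3 → Fin 3 → ℝ) (hR : ContDiffOn ℝ 2 R Ω)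
    (hSO : ∀ x ∈ Ω, (Matrix.of (R x))ᵀ * Matrix.of (R x) = 1 ∧ (Matrix.of (R x)).det = 1)
    (α : Matrix (Fin 3) (Fin 3) ℝ)
    (hcurl : ∀ x ∈ Ω, ∀ i l : Fin 3,
      ∑ j, ∑ k, eps l j k * pd j (fun y => R y i k) x = α i l) :
    ∀ x ∈ Ω, ∀ i : Fin 3,
      ∑ j, pd j (fun y => R y i j) x = ∑ j, ∑ k, eps i j k * ∑ l, α j l * R x k l := by
  intro x hx i
  have hdiff (j k : Fin 3) : DifferentiableAt ℝ (fun y => R y j k) x :=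
    have hRx := (hR.differentiableOn (by norm_num)).differentiableAt (hΩ.mem_nhds hx)
    differentiableAt_pi.mp (differentiableAt_pi.mp hRx j) k
  have hrow : (fun y => R y i) =ᶠ[nhds x] fun y => R y (i + 1) ⨯₃ R y (i + 2) := by
    filter_upwards [hΩ.mem_nhds hx] with y hy
    exact (Matrix.cross_rows_eq_row (hSO y hy).1 (hSO y hy).2 i).symm
  have hcurlα (j : Fin 3) : curl (fun y => R y j) x = α j := funext (hcurl x hx j)
  calc divergence (fun y => R y i) x
      = divergence (fun y => R y (i + 1) ⨯₃ R y (i + 2)) x := hrow.divergence_eq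
    _ = α (i + 1) ⬝ᵥ R x (i + 2) - α (i + 2) ⬝ᵥ R x (i + 1) := by
      rw [divergence_cross (hdiff _) (hdiff _), hcurlα, hcurlα, dotProduct_comm, dotProduct_comm (R x _)]
    _ = ∑ j, ∑ k, eps i j k • (α j ⬝ᵥ R x k) := (sum_eps_smul i fun j k => α j ⬝ᵥ R x k).symm
end

section
/- For ε > 0 define F_ε : B₁(0) ⊆ ℝ² → ℝ²ˣ² by F_ε(x) = Id + ε·[[0, x₁],[-x₁, 0]]. Then: (a) curl F_ε = ε(1,0)ᵀ (rowwise, constant); (b) ∫_{B₁} |F_ε - Id|² dx = (π/2)ε²; (c) there exists C > 0 such that ∫_{B₁} dist(F_ε(x), SO(2))² dx ≤ C ε³ for all ε ∈ (0,1]. -/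
open Matrix MeasureTheory

/-!
Write `t = ε x₁`. The matrix `F_ε(x) = !![1, t; -t, 1]` is `√(1 + t²)` times a rotation, so its
squared distance to `SO(2)` is at most `2 (√(1 + t²) - 1)² ≤ t⁴ / 2 ≤ ε³ x₁² / 2` on the disc,
whereas `|F_ε(x) - Id|² = 2 t²` is only quadratic in `ε`. Both integrals thus reduce to the second
moment `∫_{B₁} x₁² = π / 4`, computed in polar coordinates.
-/

open Real Set

lemma pd_const {n : ℕ} (i : Fin n) (c : ℝ) (x : Fin n → ℝ) : pd i (fun _ => c) x = 0 := by
  simp [pd]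

lemma pd_const_mul_apply {n : ℕ} (i j : Fin n) (c : ℝ) (x : Fin n → ℝ) :
    pd i (fun y => c * y j) x = if i = j then c else 0 := by
  rw [pd, ((hasFDerivAt_apply j x).const_mul c).fderiv]
  by_cases h : i = j <;> simp [h, eq_comm]

lemma polarCoord_symm_mem_unitDisc_iff {r : ℝ} (hr : 0 < r) (θ : ℝ) :
    polarCoord.symm (r, θ) ∈ {p : ℝ × ℝ | p.1 ^ 2 + p.2 ^ 2 < 1} ↔ r < 1 := by
  have hsq : (r * cos θ) ^ 2 + (r * sin θ) ^ 2 = r ^ 2 := by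
    linear_combination r ^ 2 * sin_sq_add_cos_sq θ
  simp only [polarCoord_symm_apply, mem_ofPred_eq, hsq]
  exact sq_lt_one_iff₀ hr.le

lemma setIntegral_unitDisc_fst_sq :
    ∫ p in {p : ℝ × ℝ | p.1 ^ 2 + p.2 ^ 2 < 1}, p.1 ^ 2 = π / 4 := by
  have hD : MeasurableSet {p : ℝ × ℝ | p.1 ^ 2 + p.2 ^ 2 < 1} := by
    apply measurableSet_lt <;> fun_prop
  have hpolar : ∀ p ∈ polarCoord.target,
      p.1 • {p : ℝ × ℝ | p.1 ^ 2 + p.2 ^ 2 < 1}.indicator (fun p => p.1 ^ 2) (polarCoord.symm p)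
        = (Ioo (0 : ℝ) 1 ×ˢ Ioo (-π) π).indicator (fun p => p.1 ^ 3 * cos p.2 ^ 2) p := by
    rintro ⟨r, θ⟩ ⟨hr, hθ⟩
    rcases lt_or_ge r 1 with h | h
    · rw [indicator_of_mem ((polarCoord_symm_mem_unitDisc_iff hr θ).mpr h),
        indicator_of_mem (mk_mem_prod (show r ∈ Ioo 0 1 from ⟨hr, h⟩) hθ), polarCoord_symm_apply,
        smul_eq_mul]
      ring
    · rw [indicator_of_notMem (fun h' => h.not_gt ((polarCoord_symm_mem_unitDisc_iff hr θ).mp h')),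
        indicator_of_notMem (fun h' => h.not_gt (mem_prod.mp h').1.2), smul_zero]
  have htarget : polarCoord.target ∩ Ioo (0 : ℝ) 1 ×ˢ Ioo (-π) π = Ioo (0 : ℝ) 1 ×ˢ Ioo (-π) π :=
    inter_eq_right.mpr (prod_mono (fun _ hr => hr.1) subset_rfl)
  have hr : ∫ r in Ioo (0 : ℝ) 1, r ^ 3 = 1 / 4 := by
    rw [← integral_Ioc_eq_integral_Ioo, ← intervalIntegral.integral_of_le zero_le_one,
      integral_pow]
    norm_num
  have hθ : ∫ θ in Ioo (-π) π, cos θ ^ 2 = π := by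
    rw [← integral_Ioc_eq_integral_Ioo, ← intervalIntegral.integral_of_le (by linarith [pi_pos]),
      integral_cos_sq]
    simp
  rw [← integral_indicator hD, ← integral_comp_polarCoord_symm,
    setIntegral_congr_fun polarCoord.open_target.measurableSet hpolar,
    setIntegral_indicator (measurableSet_Ioo.prod measurableSet_Ioo), htarget,
    Measure.volume_eq_prod, setIntegral_prod_mul (fun r : ℝ => r ^ 3) (fun θ => cos θ ^ 2), hr, hθ]
  ring

lemma setIntegral_unitDisc_sq_apply_zero :
    ∫ x in {x : Fin 2 → ℝ | x 0 ^ 2 + x 1 ^ 2 < 1}, x 0 ^ 2 = π / 4 := by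
  rw [← setIntegral_unitDisc_fst_sq, ← (volume_preserving_finTwoArrow ℝ).setIntegral_preimage_emb
    (MeasurableEquiv.measurableEmbedding _)]
  rfl

noncomputable def sqDistSO2 (A : Matrix (Fin 2) (Fin 2) ℝ) : ℝ :=
  sInf {d : ℝ | ∃ R : Matrix (Fin 2) (Fin 2) ℝ,
    Rᵀ * R = 1 ∧ R.det = 1 ∧ d = ∑ i, ∑ j, (A i j - R i j) ^ 2}

lemma sqDistSO2_nonneg (A : Matrix (Fin 2) (Fin 2) ℝ) : 0 ≤ sqDistSO2 A := by
  apply Real.sInf_nonneg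
  rintro d ⟨R, -, -, rfl⟩
  positivity

lemma sqDistSO2_le {A R : Matrix (Fin 2) (Fin 2) ℝ} (hR : Rᵀ * R = 1) (hdet : R.det = 1) :
    sqDistSO2 A ≤ ∑ i, ∑ j, (A i j - R i j) ^ 2 :=
  csInf_le ⟨0, by rintro d ⟨R, -, -, rfl⟩; positivity⟩ ⟨R, hR, hdet, rfl⟩

lemma sum_sq_eq_two_of_transpose_mul_self {R : Matrix (Fin 2) (Fin 2) ℝ} (hR : Rᵀ * R = 1) :
    ∑ i, ∑ j, R i j ^ 2 = 2 := by
  have h00 := congrFun (congrFun hR 0) 0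
  have h11 := congrFun (congrFun hR 1) 1
  simp only [mul_apply, transpose_apply, Fin.sum_univ_two, one_apply_eq] at h00 h11 ⊢
  linear_combination h00 + h11

lemma sqDistSO2_smul_le {R : Matrix (Fin 2) (Fin 2) ℝ} (hR : Rᵀ * R = 1) (hdet : R.det = 1)
    (s : ℝ) : sqDistSO2 (s • R) ≤ 2 * (s - 1) ^ 2 := by
  refine (sqDistSO2_le hR hdet).trans_eq ?_
  have hsum : ∑ i, ∑ j, ((s • R) i j - R i j) ^ 2 = (s - 1) ^ 2 * ∑ i, ∑ j, R i j ^ 2 := by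
    simp only [Matrix.smul_apply, smul_eq_mul, Finset.mul_sum]
    ring_nf
  rw [hsum, sum_sq_eq_two_of_transpose_mul_self hR]
  ring

lemma inv_sqrt_smul_skew_orthogonal_det_one (t : ℝ) :
    ((√(1 + t ^ 2))⁻¹ • !![1, t; -t, 1])ᵀ * ((√(1 + t ^ 2))⁻¹ • !![1, t; -t, 1]) = 1 ∧
      ((√(1 + t ^ 2))⁻¹ • !![1, t; -t, 1]).det = 1 := by
  have hs : (√(1 + t ^ 2))⁻¹ ^ 2 * (1 + t ^ 2) = 1 := by
    rw [inv_pow, sq_sqrt (by positivity), inv_mul_cancel₀ (by positivity)]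
  constructor
  · ext i j
    fin_cases i <;> fin_cases j <;>
      simp [mul_apply, Fin.sum_univ_two] <;> first | linear_combination hs | ring
  · simp [det_fin_two]
    linear_combination hs

lemma sqrt_one_add_sq_sub_one_le (t : ℝ) : √(1 + t ^ 2) - 1 ≤ t ^ 2 / 2 := by
  rw [sub_le_iff_le_add, sqrt_le_left (by positivity)]
  nlinarith [sq_nonneg (t ^ 2)]

lemma sqDistSO2_skew_le (t : ℝ) : sqDistSO2 !![1, t; -t, 1] ≤ t ^ 4 / 2 := by
  obtain ⟨hR, hdet⟩ := inv_sqrt_smul_skew_orthogonal_det_one t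
  have hs : 0 < √(1 + t ^ 2) := sqrt_pos.mpr (by positivity)
  have h1 : 1 ≤ √(1 + t ^ 2) := one_le_sqrt.mpr (by nlinarith [sq_nonneg t])
  have := sqDistSO2_smul_le hR hdet (√(1 + t ^ 2))
  rw [smul_smul, mul_inv_cancel₀ hs.ne', one_smul] at this
  nlinarith [sqrt_one_add_sq_sub_one_le t]

lemma sqDistSO2_skew_le_mul_sq {ε y : ℝ} (hε : 0 ≤ ε) (hεy : ε * y ^ 2 ≤ 1) :
    sqDistSO2 !![1, ε * y; -(ε * y), 1] ≤ ε ^ 3 / 2 * y ^ 2 :=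
  calc sqDistSO2 !![1, ε * y; -(ε * y), 1] ≤ (ε * y) ^ 4 / 2 := sqDistSO2_skew_le _
    _ = ε ^ 3 / 2 * y ^ 2 * (ε * y ^ 2) := by ring
    _ ≤ ε ^ 3 / 2 * y ^ 2 := mul_le_of_le_one_right (by positivity) hεy

theorem counterexample_naive_rigidity
    (F : ℝ → (Fin 2 → ℝ) → Fin 2 → Fin 2 → ℝ)
    (hF : ∀ ε : ℝ, ∀ x : Fin 2 → ℝ,
      F ε x = ![![1, ε * x 0], ![-(ε * x 0), 1]]) :
    (∀ ε : ℝ, ∀ x ∈ {x : Fin 2 → ℝ | (x 0) ^ 2 + (x 1) ^ 2 < 1}, ∀ i : Fin 2,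
      pd 0 (fun y => F ε y i 1) x - pd 1 (fun y => F ε y i 0) x
        = ε * (if i = 0 then 1 else 0)) ∧
    (∀ ε : ℝ,
      (∫ x in {x : Fin 2 → ℝ | (x 0) ^ 2 + (x 1) ^ 2 < 1},
        ∑ i, ∑ j, (F ε x i j - (if i = j then (1 : ℝ) else 0)) ^ 2)
      = Real.pi / 2 * ε ^ 2) ∧
    ∃ C > (0 : ℝ), ∀ ε ∈ Set.Ioc (0 : ℝ) 1,
      (∫ x in {x : Fin 2 → ℝ | (x 0) ^ 2 + (x 1) ^ 2 < 1},
        sInf {d : ℝ | ∃ Rm : Matrix (Fin 2) (Fin 2) ℝ,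
          Rmᵀ * Rm = 1 ∧ Rm.det = 1 ∧ d = ∑ i, ∑ j, (F ε x i j - Rm i j) ^ 2})
      ≤ C * ε ^ 3 := by
  refine ⟨fun ε x _ i => ?_, fun ε => ?_, ⟨π / 8, by positivity, fun ε ⟨hε0, hε1⟩ => ?_⟩⟩
  · fin_cases i <;> simp [hF, ← neg_mul, pd_const, pd_const_mul_apply]
  · have hpt (x : Fin 2 → ℝ) :
        ∑ i, ∑ j, (F ε x i j - if i = j then (1 : ℝ) else 0) ^ 2 = 2 * ε ^ 2 * x 0 ^ 2 := by
      simp [hF, Fin.sum_univ_two]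
      ring
    simp only [hpt, integral_const_mul, setIntegral_unitDisc_sq_apply_zero]
    ring
  · have hD : MeasurableSet {x : Fin 2 → ℝ | x 0 ^ 2 + x 1 ^ 2 < 1} := by
      apply measurableSet_lt <;> fun_prop
    have hpt : ∀ x ∈ {x : Fin 2 → ℝ | x 0 ^ 2 + x 1 ^ 2 < 1},
        sqDistSO2 (F ε x) ≤ ε ^ 3 / 2 * x 0 ^ 2 := by
      intro x hx
      rw [hF]
      exact sqDistSO2_skew_le_mul_sq hε0.le (by nlinarith [sq_nonneg (x 1), hx.out])
    have hint : IntegrableOn (fun x : Fin 2 → ℝ => x 0 ^ 2) {x | x 0 ^ 2 + x 1 ^ 2 < 1} :=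
      Integrable.of_integral_ne_zero (by rw [setIntegral_unitDisc_sq_apply_zero]; positivity)
    calc ∫ x in {x : Fin 2 → ℝ | x 0 ^ 2 + x 1 ^ 2 < 1}, sqDistSO2 (F ε x)
        ≤ ∫ x in {x : Fin 2 → ℝ | x 0 ^ 2 + x 1 ^ 2 < 1}, ε ^ 3 / 2 * x 0 ^ 2 :=
          integral_mono_of_nonneg (ae_of_all _ fun x => sqDistSO2_nonneg _) (hint.const_mul _)
            ((ae_restrict_iff' hD).mpr (ae_of_all _ hpt))
      _ = π / 8 * ε ^ 3 := by
          rw [integral_const_mul, setIntegral_unitDisc_sq_apply_zero]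
          ring
end
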